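/- For every γ ∈ (0,1) and every step size s > 0, there exists t₀ > 3γ√s (depending only on γ and s) such that the solution X of the high-resolution differential equation obeys, for all t ≥ t₀, f(X(t) + √s Ẋ(t)) − f(x⋆) ≤ E(t₀) / (t^γ (t^γ − 2γ√s t^{γ−1})), where E is the continuous Lyapunov function. -/

import Mathlib

/-!
Along the flow, the time derivative of `E` is `t^(2(γ-1))` times
`(2γK - γ√s Q/(t - 3γ√s)²) φ - 2γK ⟪∇f(Y), Y - x⋆⟫ - (≥ 0) ‖∇f(Y)‖² - (≥ 0) ‖X - x⋆‖²`,
where `Y = X + √s Ẋ`, `φ = f(Y) - f(x⋆)`, `K = t + 3γ√s/2` and `Q` is a quadratic in `t` with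
negative discriminant for `γ ∈ (0,1)`. Convexity gives `φ ≤ ⟪∇f(Y), Y - x⋆⟫`, so `E` is
nonincreasing on `t > 3γ√s`. The two squared terms of `E` are nonnegative and
`(t + 3γ√s/2)/(t - 3γ√s) ≥ 1`, so `t^γ (t^γ - 2γ√s t^(γ-1)) φ(t) ≤ E(t) ≤ E(t₀)`.
-/

open Set Filter Topology

/-- The continuous Lyapunov function for the underdamped high-resolution ODE. -/
noncomputable def lyapCont (γ s : ℝ) {d : ℕ} (f : EuclideanSpace ℝ (Fin d) → ℝ)
    (xstar : EuclideanSpace ℝ (Fin d)) (X V : ℝ → EuclideanSpace ℝ (Fin d)) (t : ℝ) : ℝ :=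
  (t ^ γ * (t ^ γ - 2 * γ * Real.sqrt s * t ^ (γ - 1)) / (t - 3 * γ * Real.sqrt s)) *
      (t + 3 * γ * Real.sqrt s / 2) * (f (X t + Real.sqrt s • V t) - f xstar) +
    (1 / 2) * ‖(t ^ γ) • V t + (2 * γ * t ^ (γ - 1)) • (X t - xstar)‖ ^ 2 +
    γ * (1 - γ) * t ^ (2 * (γ - 1)) * ‖X t - xstar‖ ^ 2

theorem ConvexOn.add_inner_sub_le_of_hasGradientAt {E : Type*} [NormedAddCommGroup E]
    [InnerProductSpace ℝ E] [CompleteSpace E] {f : E → ℝ} {s : Set E} {g x y : E}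
    (hf : ConvexOn ℝ s f) (hx : x ∈ s) (hy : y ∈ s) (hg : HasGradientAt f g x) :
    f x + inner ℝ g (y - x) ≤ f y := by
  let ℓ : ℝ →ᵃ[ℝ] E := AffineMap.lineMap x y
  have hderiv : HasDerivAt (f ∘ ℓ) (inner ℝ g (y - x)) 0 := by
    have h := hg.hasFDerivAt
    rw [← AffineMap.lineMap_apply_zero (k := ℝ) x y] at h
    exact h.comp_hasDerivAt 0 AffineMap.hasDerivAt_lineMap
  have := (hf.comp_affineMap ℓ).le_slope_of_hasDerivAt (x := 0) (y := 1)
    (by simpa [ℓ]) (by simpa [ℓ]) one_pos hderiv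
  simp only [slope_def_field, Function.comp_apply, AffineMap.lineMap_apply_one,
    AffineMap.lineMap_apply_zero, sub_zero, div_one, ℓ] at this
  linarith

theorem rpow_mul_rpow_sub_mul_rpow_sub_one_pos {t γ c : ℝ} (ht : 0 < t) (hc : c < t) :
    0 < t ^ γ * (t ^ γ - c * t ^ (γ - 1)) := by
  have hsplit : t ^ γ - c * t ^ (γ - 1) = t ^ (γ - 1) * (t - c) := by
    rw [mul_sub, ← Real.rpow_add_one ht.ne']
    ring_nf
  rw [hsplit]
  have := Real.rpow_pos_of_pos ht γ
  have := Real.rpow_pos_of_pos ht (γ - 1)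
  have : 0 < t - c := by linarith
  positivity

/-- The derivative of `lyapCont` along the flow, in terms of `φ = f(Y) - f(x⋆)`,
`ρ = ⟪∇f(Y), Y - x⋆⟫`, `G = ‖∇f(Y)‖²` and `w = ‖X - x⋆‖²`, where `Y = X + σ Ẋ`. -/
noncomputable def lyapContDeriv (γ σ t φ ρ G w : ℝ) : ℝ :=
  t ^ (2 * (γ - 1)) *
    ((2 * γ * (t + 3 * γ * σ / 2) - γ * σ * ((5 / 2 - 2 * γ) * t ^ 2 + 3 * (γ - 2) * (γ * σ) * t +
        9 * (γ + 1) * (γ * σ) ^ 2) / (t - 3 * γ * σ) ^ 2) * φ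
      - 2 * γ * (t + 3 * γ * σ / 2) * ρ
      - σ * (t - 2 * γ * σ) * (t + 3 * γ * σ / 2) ^ 2 / (t - 3 * γ * σ) * G
      - 2 * γ * (1 - γ) * (1 + γ) / t * w)

theorem hasDerivAt_lyapCont {γ s t : ℝ} {d : ℕ} {f : EuclideanSpace ℝ (Fin d) → ℝ}
    {g xstar : EuclideanSpace ℝ (Fin d)} {X V : ℝ → EuclideanSpace ℝ (Fin d)}
    (ht : 0 < t) (ht' : t ≠ 3 * γ * Real.sqrt s) (hX : HasDerivAt X (V t) t)
    (hV : HasDerivAt V (-((3 * γ / t) • V t + (1 + 3 * γ * Real.sqrt s / (2 * t)) • g)) t)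
    (hf : HasGradientAt f g (X t + Real.sqrt s • V t)) :
    HasDerivAt (lyapCont γ s f xstar X V)
      (lyapContDeriv γ (Real.sqrt s) t (f (X t + Real.sqrt s • V t) - f xstar)
        (inner ℝ g (X t + Real.sqrt s • V t - xstar)) (‖g‖ ^ 2) (‖X t - xstar‖ ^ 2)) t := by
  set σ := Real.sqrt s
  have hW : HasDerivAt (fun τ => X τ - xstar) (V t) t := hX.sub_const _
  have hpow : ∀ p : ℝ, HasDerivAt (fun τ : ℝ => τ ^ p) (p * t ^ (p - 1)) t :=
    fun p => Real.hasDerivAt_rpow_const (Or.inl ht.ne')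
  have hφ : HasDerivAt (fun τ => f (X τ + σ • V τ) - f xstar)
      (inner ℝ g (V t + σ • -((3 * γ / t) • V t + (1 + 3 * γ * σ / (2 * t)) • g))) t :=
    (hf.hasFDerivAt.comp_hasDerivAt t (hX.add (hV.const_smul σ))).sub_const _
  have hA := ((((hpow γ).mul ((hpow γ).sub ((hpow (γ - 1)).const_mul (2 * γ * σ)))).div
    ((hasDerivAt_id t).sub_const (3 * γ * σ)) (sub_ne_zero.2 ht')).mul
    ((hasDerivAt_id t).add_const (3 * γ * σ / 2))).mul hφ
  have hu := ((hpow γ).smul hV).add (((hpow (γ - 1)).const_mul (2 * γ)).smul hW)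
  have hB := ((hpow (2 * (γ - 1))).const_mul (γ * (1 - γ))).mul (hW.norm_sq)
  have hsum := (hA.add ((hu.norm_sq).const_mul (1 / 2))).add hB
  refine HasDerivAt.congr_deriv (f := lyapCont γ s f xstar X V) hsum ?_
  have e1 : t ^ γ = t ^ (γ - 1) * t := by
    rw [← Real.rpow_add_one ht.ne']; ring_nf
  have e2 : t ^ (γ - 1 - 1) = t ^ (γ - 1) / t := Real.rpow_sub_one ht.ne' _
  have e3 : t ^ (2 * (γ - 1)) = (t ^ (γ - 1)) ^ 2 := by
    rw [← Real.rpow_natCast, ← Real.rpow_mul ht.le]; ring_nf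
  have e4 : t ^ (2 * (γ - 1) - 1) = (t ^ (γ - 1)) ^ 2 / t := by
    rw [Real.rpow_sub_one ht.ne', e3]
  rw [show X t + σ • V t - xstar = (X t - xstar) + σ • V t by abel]
  simp only [lyapContDeriv, Pi.mul_apply, Pi.sub_apply, Pi.add_apply, Pi.smul_apply', Pi.div_apply,
    id, inner_add_left, inner_add_right, inner_smul_left, inner_smul_right,
    inner_neg_right, real_inner_self_eq_norm_sq, e1, e2, e3, e4, RCLike.conj_to_real]
  rw [real_inner_comm g (V t), real_inner_comm g (X t - xstar), real_inner_comm (V t) (X t - xstar)]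
  have ht0 : t ≠ 0 := ht.ne'
  have hD : t - γ * σ * 3 ≠ 0 := fun h => ht' (by linarith)
  have ha : t ^ (γ - 1) ≠ 0 := (Real.rpow_pos_of_pos ht _).ne'
  generalize t ^ (γ - 1) = a at ha ⊢
  generalize f (X t + σ • V t) - f xstar = φ
  generalize inner ℝ g (V t) = p
  generalize inner ℝ g (X t - xstar) = q
  field_simp
  ring

theorem lyapContDeriv_nonpos {γ σ t φ ρ G w : ℝ} (hγ : γ ∈ Ioo (0 : ℝ) 1) (hσ : 0 ≤ σ)
    (ht : 3 * γ * σ < t) (hφ : 0 ≤ φ) (hφρ : φ ≤ ρ) (hG : 0 ≤ G) (hw : 0 ≤ w) :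
    lyapContDeriv γ σ t φ ρ G w ≤ 0 := by
  obtain ⟨hγ0, hγ1⟩ := hγ
  have hγσ : 0 ≤ γ * σ := by positivity
  have ht0 : 0 < t := by linarith
  -- `2(5 - 4γ) Q = ((5 - 4γ) t + 3(γ - 2)γσ)² + 27 (2 + 2γ - 3γ²) (γσ)²`
  have hQ : 0 ≤ (5 / 2 - 2 * γ) * t ^ 2 + 3 * (γ - 2) * (γ * σ) * t +
      9 * (γ + 1) * (γ * σ) ^ 2 := by
    nlinarith [sq_nonneg ((5 - 4 * γ) * t + 3 * (γ - 2) * (γ * σ)),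
      mul_nonneg (by nlinarith : (0 : ℝ) ≤ 2 + 2 * γ - 3 * γ ^ 2) (sq_nonneg (γ * σ))]
  have hφterm : (2 * γ * (t + 3 * γ * σ / 2) - γ * σ * ((5 / 2 - 2 * γ) * t ^ 2 +
      3 * (γ - 2) * (γ * σ) * t + 9 * (γ + 1) * (γ * σ) ^ 2) / (t - 3 * γ * σ) ^ 2) * φ
      - 2 * γ * (t + 3 * γ * σ / 2) * ρ ≤ 0 := by
    have : 0 ≤ γ * σ * ((5 / 2 - 2 * γ) * t ^ 2 + 3 * (γ - 2) * (γ * σ) * t +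
        9 * (γ + 1) * (γ * σ) ^ 2) / (t - 3 * γ * σ) ^ 2 := by positivity
    nlinarith [mul_nonneg this hφ,
      mul_le_mul_of_nonneg_left hφρ (by positivity : 0 ≤ 2 * γ * (t + 3 * γ * σ / 2))]
  have hGterm : 0 ≤ σ * (t - 2 * γ * σ) * (t + 3 * γ * σ / 2) ^ 2 / (t - 3 * γ * σ) * G := by
    have : 0 ≤ t - 2 * γ * σ := by nlinarith
    have : 0 < t - 3 * γ * σ := by linarith
    positivity
  have hwterm : 0 ≤ 2 * γ * (1 - γ) * (1 + γ) / t * w := by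
    have : 0 < 1 - γ := by linarith
    positivity
  unfold lyapContDeriv
  exact mul_nonpos_of_nonneg_of_nonpos (by positivity) (by linarith)

section Lyapunov

variable {γ s : ℝ} {d : ℕ} {f : EuclideanSpace ℝ (Fin d) → ℝ}
  {f' : EuclideanSpace ℝ (Fin d) → EuclideanSpace ℝ (Fin d)} {xstar : EuclideanSpace ℝ (Fin d)}
  {X V : ℝ → EuclideanSpace ℝ (Fin d)}

theorem lyapCont_antitoneOn (hγ : γ ∈ Ioo (0 : ℝ) 1) (hconv : ConvexOn ℝ univ f)
    (hgrad : ∀ z, HasGradientAt f (f' z) z) (hmin : ∀ z, f xstar ≤ f z)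
    (hX : ∀ t ∈ Ioi (3 * γ * Real.sqrt s), HasDerivAt X (V t) t)
    (hV : ∀ t ∈ Ioi (3 * γ * Real.sqrt s), HasDerivAt V
      (-((3 * γ / t) • V t +
          (1 + 3 * γ * Real.sqrt s / (2 * t)) • f' (X t + Real.sqrt s • V t))) t) :
    AntitoneOn (lyapCont γ s f xstar X V) (Ioi (3 * γ * Real.sqrt s)) := by
  have hσ : 0 ≤ 3 * γ * Real.sqrt s := by have := hγ.1; positivity
  have hderiv : ∀ t ∈ Ioi (3 * γ * Real.sqrt s), HasDerivAt (lyapCont γ s f xstar X V)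
      (lyapContDeriv γ (Real.sqrt s) t (f (X t + Real.sqrt s • V t) - f xstar)
        (inner ℝ (f' (X t + Real.sqrt s • V t)) (X t + Real.sqrt s • V t - xstar))
        (‖f' (X t + Real.sqrt s • V t)‖ ^ 2) (‖X t - xstar‖ ^ 2)) t :=
    fun t ht => hasDerivAt_lyapCont (hσ.trans_lt ht) ht.ne' (hX t ht) (hV t ht) (hgrad _)
  refine antitoneOn_of_deriv_nonpos (convex_Ioi _)
    (fun t ht => (hderiv t ht).continuousAt.continuousWithinAt) ?_ ?_ <;> rw [interior_Ioi]
  · exact fun t ht => (hderiv t ht).differentiableAt.differentiableWithinAt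
  · intro t ht
    rw [(hderiv t ht).deriv]
    have hfirst := hconv.add_inner_sub_le_of_hasGradientAt (mem_univ _) (mem_univ xstar)
      (hgrad (X t + Real.sqrt s • V t))
    rw [← neg_sub, inner_neg_right] at hfirst
    exact lyapContDeriv_nonpos hγ (Real.sqrt_nonneg s) ht (sub_nonneg.2 (hmin _)) (by linarith)
      (sq_nonneg _) (sq_nonneg _)

theorem mul_sub_le_lyapCont {t : ℝ} (hγ : γ ∈ Ioo (0 : ℝ) 1) (ht : 3 * γ * Real.sqrt s < t)
    (hφ : f xstar ≤ f (X t + Real.sqrt s • V t)) :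
    t ^ γ * (t ^ γ - 2 * γ * Real.sqrt s * t ^ (γ - 1)) * (f (X t + Real.sqrt s • V t) - f xstar)
      ≤ lyapCont γ s f xstar X V t := by
  obtain ⟨hγ0, hγ1⟩ := hγ
  have hγσ : 0 ≤ γ * Real.sqrt s := by positivity
  have hP := rpow_mul_rpow_sub_mul_rpow_sub_one_pos (γ := γ) (by linarith : 0 < t)
    (by linarith : 2 * γ * Real.sqrt s < t)
  have hcoef : t ^ γ * (t ^ γ - 2 * γ * Real.sqrt s * t ^ (γ - 1)) ≤
      t ^ γ * (t ^ γ - 2 * γ * Real.sqrt s * t ^ (γ - 1)) / (t - 3 * γ * Real.sqrt s) *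
        (t + 3 * γ * Real.sqrt s / 2) := by
    rw [div_mul_eq_mul_div, le_div_iff₀ (by linarith)]
    nlinarith
  have hkin : 0 ≤ 1 / 2 * ‖t ^ γ • V t + (2 * γ * t ^ (γ - 1)) • (X t - xstar)‖ ^ 2 := by
    positivity
  have hpot : 0 ≤ γ * (1 - γ) * t ^ (2 * (γ - 1)) * ‖X t - xstar‖ ^ 2 := by
    have : 0 < 1 - γ := by linarith
    have : 0 < t := by linarith
    positivity
  unfold lyapCont
  nlinarith [mul_le_mul_of_nonneg_right hcoef (sub_nonneg.2 hφ)]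

end Lyapunov

theorem underdamped_continuous_objective_rate
    (γ s : ℝ) (hγ : γ ∈ Set.Ioo (0 : ℝ) 1) :
    ∃ t₀ : ℝ, 3 * γ * Real.sqrt s < t₀ ∧
      ∀ (d : ℕ) (L : ℝ) (f : EuclideanSpace ℝ (Fin d) → ℝ)
        (f' : EuclideanSpace ℝ (Fin d) → EuclideanSpace ℝ (Fin d))
        (xstar : EuclideanSpace ℝ (Fin d))
        (X V : ℝ → EuclideanSpace ℝ (Fin d)),
        0 < L →
        ConvexOn ℝ Set.univ f →
        (∀ z, HasGradientAt f (f' z) z) →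
        (∀ z w, ‖f' z - f' w‖ ≤ L * ‖z - w‖) →
        (∀ z, f xstar ≤ f z) →
        (∀ t ∈ Set.Ioi (0 : ℝ), HasDerivAt X (V t) t) →
        (∀ t ∈ Set.Ioi (0 : ℝ), HasDerivAt V
          (-((3 * γ / t) • V t +
              (1 + 3 * γ * Real.sqrt s / (2 * t)) • f' (X t + Real.sqrt s • V t))) t) →
        ∀ t : ℝ, t₀ ≤ t →
          f (X t + Real.sqrt s • V t) - f xstar ≤
            lyapCont γ s f xstar X V t₀ /
              (t ^ γ * (t ^ γ - 2 * γ * Real.sqrt s * t ^ (γ - 1))) := by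
  have hσ : 0 ≤ 3 * γ * Real.sqrt s := by have := hγ.1; positivity
  refine ⟨3 * γ * Real.sqrt s + 1, by linarith, ?_⟩
  intro d L f f' xstar X V _ hconv hgrad _ hmin hX hV t ht
  have hI : Ioi (3 * γ * Real.sqrt s) ⊆ Ioi 0 := Ioi_subset_Ioi hσ
  have hanti := lyapCont_antitoneOn hγ hconv hgrad hmin (fun τ hτ => hX τ (hI hτ))
    (fun τ hτ => hV τ (hI hτ))
  have ht₀ : 3 * γ * Real.sqrt s < 3 * γ * Real.sqrt s + 1 := by linarith
  rw [le_div_iff₀ (rpow_mul_rpow_sub_mul_rpow_sub_one_pos (by linarith) (by linarith))]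
  calc (f (X t + Real.sqrt s • V t) - f xstar) *
        (t ^ γ * (t ^ γ - 2 * γ * Real.sqrt s * t ^ (γ - 1)))
    _ ≤ lyapCont γ s f xstar X V t := by
      rw [mul_comm]; exact mul_sub_le_lyapCont hγ (by linarith) (hmin _)
    _ ≤ lyapCont γ s f xstar X V (3 * γ * Real.sqrt s + 1) := hanti ht₀ (ht₀.trans_le ht) ht
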